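/- arXiv:2510.11034 — 5 statements merged into one kernel-verified Lean document; each statement's English description precedes it below -/
import Mathlib

section
/- Let A ⊆ ℝ^ω be range-invariant. Then player I has a winning strategy in the Gale–Stewart game on ℝ with payoff A if and only if there is a function f : ℝ^{<ω} → ℝ such that for every countable set of reals a closed under f, every enumeration of a (as an ω-sequence) belongs to A. -/
/-- The finite sequence of the first `n` moves of a play `x` of reals. -/
def playPrefix (x : ℕ → ℝ) (n : ℕ) : List ℝ :=
  List.ofFn fun i : Fin n => x i

/-- A payoff set `A ⊆ ℝ^ω` is range-invariant if membership depends only on the range. -/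
def RangeInvariant (A : Set (ℕ → ℝ)) : Prop :=
  ∀ x y : ℕ → ℝ, Set.range x = Set.range y → (x ∈ A ↔ y ∈ A)

/-!
If `σ` wins for I and `a` is countable and closed under `σ`, let II enumerate `a` while I follows
`σ`: the resulting play has range `a` and is in `A`, so by range invariance every enumeration of
`a` is in `A`. Conversely, given `f`, let I at round `2n`, with `n = ⟪m, k⟫`, play `f` of the
earlier moves listed by the `k`-th finite sequence of indices. Every finite sequence of indices
recurs with arbitrarily large padding `m`, so the range of any play following this strategy is
closed under `f`.
-/

open Set

section Play

variable (x : ℕ → ℝ)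

@[simp]
lemma length_playPrefix (n : ℕ) : (playPrefix x n).length = n := by
  simp [playPrefix]

lemma playPrefix_succ (n : ℕ) : playPrefix x (n + 1) = playPrefix x n ++ [x n] := by
  simp only [playPrefix, List.ofFn_succ_last]
  rfl

lemma mem_playPrefix {n : ℕ} {r : ℝ} : r ∈ playPrefix x n ↔ ∃ i < n, x i = r := by
  simp [playPrefix, List.mem_ofFn, Fin.exists_iff]

lemma getD_playPrefix {n i : ℕ} (h : i < n) : (playPrefix x n).getD i 0 = x i := by
  simp [playPrefix, List.getD_eq_getElem?_getD, h]

lemma exists_map_eq_of_forall_mem_range {s : List ℝ} (hs : ∀ r ∈ s, r ∈ range x) :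
    ∃ l : List ℕ, l.map x = s := by
  induction s with
  | nil => exact ⟨[], rfl⟩
  | cons r s ih =>
    obtain ⟨i, rfl⟩ := hs r List.mem_cons_self
    obtain ⟨l, rfl⟩ := ih fun r hr => hs r (List.mem_cons_of_mem _ hr)
    exact ⟨i :: l, rfl⟩

end Play

section MoveRule

variable (ρ : List ℝ → ℝ)

def ruledPositions : ℕ → List ℝ
  | 0 => []
  | n + 1 => ruledPositions n ++ [ρ (ruledPositions n)]

lemma playPrefix_ruledPositions (n : ℕ) :
    playPrefix (fun k => ρ (ruledPositions ρ k)) n = ruledPositions ρ n := by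
  induction n with
  | zero => rfl
  | succ n ih => rw [playPrefix_succ, ih, ruledPositions]

lemma exists_play_of_moveRule : ∃ x : ℕ → ℝ, ∀ n, x n = ρ (playPrefix x n) :=
  ⟨fun k => ρ (ruledPositions ρ k), fun n => by rw [playPrefix_ruledPositions]⟩

variable {ρ}

lemma range_subset_of_moveRule {a : Set ℝ} (hρ : ∀ p : List ℝ, (∀ r ∈ p, r ∈ a) → ρ p ∈ a)
    {x : ℕ → ℝ} (hx : ∀ n, x n = ρ (playPrefix x n)) : range x ⊆ a := by
  rintro _ ⟨n, rfl⟩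
  induction n using Nat.strong_induction_on with
  | _ n ih =>
    rw [hx n]
    refine hρ _ fun r hr => ?_
    obtain ⟨i, hi, rfl⟩ := (mem_playPrefix x).1 hr
    exact ih i hi

end MoveRule

lemma exists_play_range_eq_of_closed (σ : List ℝ → ℝ) {a : Set ℝ} (ha : a.Countable)
    (hne : a.Nonempty) (hσ : ∀ s : List ℝ, (∀ r ∈ s, r ∈ a) → σ s ∈ a) :
    ∃ y : ℕ → ℝ, (∀ n, y (2 * n) = σ (playPrefix y (2 * n))) ∧ range y = a := by
  obtain ⟨e, rfl⟩ := ha.exists_eq_range hne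
  let ρ : List ℝ → ℝ := fun p => if Even p.length then σ p else e (p.length / 2)
  obtain ⟨y, hy⟩ := exists_play_of_moveRule ρ
  have hρ : ∀ p : List ℝ, (∀ r ∈ p, r ∈ range e) → ρ p ∈ range e := by
    intro p hp
    by_cases hp2 : Even p.length
    · simpa [ρ, hp2] using hσ p hp
    · simp [ρ, hp2]
  refine ⟨y, fun n => by simp [hy (2 * n), ρ], (range_subset_of_moveRule hρ hy).antisymm ?_⟩
  rintro _ ⟨k, rfl⟩
  refine ⟨2 * k + 1, ?_⟩
  have hodd : ¬Even (2 * k + 1) := Nat.not_even_iff_odd.2 (odd_two_mul_add_one k)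
  simp only [hy (2 * k + 1), ρ, length_playPrefix, hodd, if_false]
  congr 1
  omega

/-- Out-of-range indices read as `0`: harmless, since every move of I lies in the range anyway. -/
noncomputable def closureStrategy (f : List ℝ → ℝ) (p : List ℝ) : ℝ :=
  f (((Encodable.decode (α := List ℕ) (p.length / 2).unpair.2).getD []).map (p.getD · 0))

lemma apply_mem_range_of_follows_closureStrategy (f : List ℝ → ℝ) {x : ℕ → ℝ}
    (hx : ∀ n, x (2 * n) = closureStrategy f (playPrefix x (2 * n)))
    {s : List ℝ} (hs : ∀ r ∈ s, r ∈ range x) : f s ∈ range x := by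
  obtain ⟨l, rfl⟩ := exists_map_eq_of_forall_mem_range x hs
  set n := Nat.pair (l.sum + 1) (Encodable.encode l)
  have hlt : ∀ i ∈ l, i < 2 * n := fun i hi => by
    have := List.le_sum_of_mem hi
    have := Nat.left_le_pair (l.sum + 1) (Encodable.encode l)
    omega
  refine ⟨2 * n, ?_⟩
  rw [hx n, closureStrategy, length_playPrefix, Nat.mul_div_cancel_left n two_pos,
    Nat.unpair_pair, Encodable.encodek, Option.getD_some]
  exact congrArg f (List.map_congr_left fun i hi => getD_playPrefix x (hlt i hi))

/-- For a range-invariant `A ⊆ ℝ^ω`, player I has a winning strategy in the Gale–Stewart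
game on `ℝ` with payoff `A` (player I moves at even rounds) iff there is a function
`f : ℝ^{<ω} → ℝ` such that every countable set of reals closed under `f` has all of its
enumerations (as `ω`-sequences) in `A`. -/
theorem winning_strategy_iff_closure_function
    (A : Set (ℕ → ℝ)) (hA : RangeInvariant A) :
    (∃ σ : List ℝ → ℝ, ∀ x : ℕ → ℝ,
        (∀ n, x (2 * n) = σ (playPrefix x (2 * n))) → x ∈ A) ↔
    (∃ f : List ℝ → ℝ, ∀ a : Set ℝ, a.Countable →
        (∀ s : List ℝ, (∀ r ∈ s, r ∈ a) → f s ∈ a) →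
        ∀ x : ℕ → ℝ, Set.range x = a → x ∈ A) := by
  constructor
  · rintro ⟨σ, hσ⟩
    refine ⟨σ, fun a ha hclosed x hx => ?_⟩
    obtain ⟨y, hyσ, hy⟩ :=
      exists_play_range_eq_of_closed σ ha (hx ▸ range_nonempty x) hclosed
    exact (hA x y (hx.trans hy.symm)).2 (hσ y hyσ)
  · rintro ⟨f, hf⟩
    exact ⟨closureStrategy f, fun x hx => hf (range x) (countable_range x)
      (fun _ => apply_mem_range_of_follows_closureStrategy f hx) x rfl⟩
end

section
/- For a range-invariant A ⊆ ℝ^ω, there is a function f : ℝ^{<ω} → ℝ such that every countable set of reals closed under f has all its enumerations in A, if and only if there is a function F : ℝ^{<ω} → 𝒫_{ω₁}(ℝ) with the same property (every countable a closed under F, i.e. F(s) ⊆ a for all finite sequences s from a, has all enumerations in A) — provided every relation on the reals can be uniformized. -/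
/-!
Given countable-valued `F`, enumerate each `{0} ∪ F s ∪ F []` as `e s : ℕ → ℝ` and let a single
function `f` read the enumerations: `f [] = 0`, `f [n] = n + 1`, and `f (n :: s) = e s n` for
nonempty `s`. A set closed under `f` contains every natural number, hence every value of each
`e s` with `s` drawn from it; these values cover `F s`, and also `F []`, which the singleton lists
cannot reach because they are spent on the successor.
-/

open Function Set

section ClosureFunctions

variable {α : Type*}

def IsClosedUnder (f : List α → α) (a : Set α) : Prop :=
  ∀ s : List α, (∀ r ∈ s, r ∈ a) → f s ∈ a

def IsClosedUnderSets (F : List α → Set α) (a : Set α) : Prop :=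
  ∀ s : List α, (∀ r ∈ s, r ∈ a) → F s ⊆ a

theorem isClosedUnderSets_singleton_iff {f : List α → α} {a : Set α} :
    IsClosedUnderSets (fun s => {f s}) a ↔ IsClosedUnder f a := by
  simp only [IsClosedUnderSets, IsClosedUnder, singleton_subset_iff]

variable [AddMonoidWithOne α]

noncomputable def closureFunOfEnum (e : List α → ℕ → α) : List α → α
  | [] => 0
  | [x] => (partialInv Nat.cast x).elim 0 fun n => ((n + 1 : ℕ) : α)
  | x :: y :: s => (partialInv Nat.cast x).elim 0 fun n => e (y :: s) n

variable {e : List α → ℕ → α} {a : Set α}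

@[simp]
theorem closureFunOfEnum_nil : closureFunOfEnum e [] = 0 := rfl

variable [CharZero α]

@[simp]
theorem closureFunOfEnum_singleton_natCast (n : ℕ) :
    closureFunOfEnum e [(n : α)] = ((n + 1 : ℕ) : α) := by
  simp [closureFunOfEnum, partialInv_left Nat.cast_injective]

@[simp]
theorem closureFunOfEnum_natCast_cons_cons (n : ℕ) (y : α) (s : List α) :
    closureFunOfEnum e ((n : α) :: y :: s) = e (y :: s) n := by
  simp [closureFunOfEnum, partialInv_left Nat.cast_injective]

theorem IsClosedUnder.natCast_mem (h : IsClosedUnder (closureFunOfEnum e) a) (n : ℕ) :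
    (n : α) ∈ a := by
  induction n with
  | zero => simpa using h [] (by simp)
  | succ n ih => simpa using h [(n : α)] (by simpa using ih)

theorem IsClosedUnder.range_subset (h : IsClosedUnder (closureFunOfEnum e) a) {y : α}
    {s : List α} (hs : ∀ r ∈ y :: s, r ∈ a) : range (e (y :: s)) ⊆ a := by
  rintro _ ⟨n, rfl⟩
  simpa using h ((n : α) :: y :: s) (by simpa [h.natCast_mem n] using hs)

theorem exists_isClosedUnder_imp_isClosedUnderSets {F : List α → Set α}
    (hF : ∀ s, (F s).Countable) :
    ∃ f : List α → α, ∀ a, IsClosedUnder f a → IsClosedUnderSets F a := by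
  choose e he using fun s => (((hF s).union (hF [])).insert 0).exists_eq_range
    (insert_nonempty 0 _)
  refine ⟨closureFunOfEnum e, fun a h => ?_⟩
  have hcover : ∀ y s, (∀ r ∈ y :: s, r ∈ a) → F (y :: s) ∪ F [] ⊆ a := fun y s hs =>
    (subset_insert _ _).trans <| (he (y :: s)).trans_subset (h.range_subset hs)
  rintro (_ | ⟨y, s⟩) hs
  · exact subset_union_right.trans <| hcover 0 [] (by simpa using h.natCast_mem 0)
  · exact subset_union_left.trans (hcover y s hs)

end ClosureFunctions

theorem closure_function_iff_countable_valued_closure_function_general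
    (A : Set (ℕ → ℝ)) :
    (∃ f : List ℝ → ℝ, ∀ a : Set ℝ, a.Countable →
        (∀ s : List ℝ, (∀ r ∈ s, r ∈ a) → f s ∈ a) →
        ∀ x : ℕ → ℝ, Set.range x = a → x ∈ A) ↔
    (∃ F : List ℝ → Set ℝ, (∀ s, (F s).Countable) ∧
        ∀ a : Set ℝ, a.Countable →
        (∀ s : List ℝ, (∀ r ∈ s, r ∈ a) → F s ⊆ a) →
        ∀ x : ℕ → ℝ, Set.range x = a → x ∈ A) := by
  constructor
  · rintro ⟨f, hf⟩
    refine ⟨fun s => {f s}, fun _ => countable_singleton _, fun a ha hcl => hf a ha ?_⟩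
    exact isClosedUnderSets_singleton_iff.mp hcl
  · rintro ⟨F, hFc, hF⟩
    obtain ⟨f, hf⟩ := exists_isClosedUnder_imp_isClosedUnderSets hFc
    exact ⟨f, fun a ha hcl => hF a ha (hf a hcl)⟩

/-- For a range-invariant `A ⊆ ℝ^ω`, assuming every total relation on the reals can be
uniformized: there is `f : ℝ^{<ω} → ℝ` such that every countable set of reals closed under
`f` has all its enumerations in `A`, iff there is `F : ℝ^{<ω} → 𝒫_{ω₁}(ℝ)` (i.e. with
countable values) such that every countable set of reals closed under `F` (meaning
`F(s) ⊆ a` for all finite sequences `s` from `a`) has all its enumerations in `A`. -/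
theorem closure_function_iff_countable_valued_closure_function
    (A : Set (ℕ → ℝ)) (hA : RangeInvariant A)
    (huni : ∀ R : ℝ → ℝ → Prop, (∀ x, ∃ y, R x y) → ∃ g : ℝ → ℝ, ∀ x, R x (g x)) :
    (∃ f : List ℝ → ℝ, ∀ a : Set ℝ, a.Countable →
        (∀ s : List ℝ, (∀ r ∈ s, r ∈ a) → f s ∈ a) →
        ∀ x : ℕ → ℝ, Set.range x = a → x ∈ A) ↔
    (∃ F : List ℝ → Set ℝ, (∀ s, (F s).Countable) ∧
        ∀ a : Set ℝ, a.Countable →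
        (∀ s : List ℝ, (∀ r ∈ s, r ∈ a) → F s ⊆ a) →
        ∀ x : ℕ → ℝ, Set.range x = a → x ∈ A) :=
  closure_function_iff_countable_valued_closure_function_general A
end

section
/- If there is a non-principal ultrafilter on ω, then there is a subset of 2^ω that is not Lebesgue measurable. Consequently, if every set of reals is Lebesgue measurable, then every ultrafilter on any set is countably complete (closed under countable intersections). -/
/-!
Flipping finitely many bits of `x` does not change whether `{n | x n = true}` belongs to a
non-principal ultrafilter `U`, while flipping all bits swaps membership. Hence, for every finite
set `s` of coordinates, flipping the bits outside `s` is a measure-preserving map that fixes every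
cylinder over `s` and carries the set `A` coding `U` onto its complement. If `A` were
measurable, approximating it within `μ univ / 2` by such a cylinder `C` would give
`μ univ = μ (A ∆ Aᶜ) ≤ μ (A ∆ C) + μ (C ∆ Aᶜ) = 2 μ (A ∆ C) < μ univ`.

An ultrafilter `V` on `α` that is not countably complete is witnessed by `g n ∈ V` with
`⋂ n, g n ∉ V`; pushing `V` forward along `a ↦ min {n | a ∉ g n}` gives a non-principal
ultrafilter on `ℕ`.
-/

open MeasureTheory

/-- The Cantor space `2^ω`. -/
abbrev CantorB := ℕ → Bool

/-- The basic open set `[s]` of the Cantor space determined by a finite binary sequence. -/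
def cylB (s : List Bool) : Set CantorB :=
  {x | ∀ i : Fin s.length, x i = s.get i}

open Set Filter
open scoped ENNReal symmDiff

theorem not_nullMeasurableSet_of_preimage_eq_compl {ι : Type*} {X : ι → Type*}
    [∀ i, MeasurableSpace (X i)] {μ : Measure (Π i, X i)} [IsFiniteMeasure μ] [NeZero μ]
    {A : Set (Π i, X i)}
    (h : ∀ s : Finset ι, ∃ τ : (Π i, X i) → (Π i, X i),
      MeasurePreserving τ μ μ ∧ (∀ x, ∀ i ∈ s, τ x i = x i) ∧ τ ⁻¹' A = Aᶜ) :
    ¬ NullMeasurableSet A μ := by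
  intro hA
  have hε : 0 < μ univ / 2 := ENNReal.half_pos (Measure.measure_univ_ne_zero.2 (NeZero.ne μ))
  obtain ⟨t, ht, htA⟩ := exists_measure_symmDiff_lt_of_generateFrom_isSetRing (μ := μ)
    isSetRing_measurableCylinders
    ⟨{univ}, countable_singleton _, by simpa using univ_mem_measurableCylinders X, by simp⟩
    generateFrom_measurableCylinders.symm (measurableSet_toMeasurable μ A) hε
  rw [measure_congr ((ae_eq_refl t).symmDiff hA.toMeasurable_ae_eq)] at htA
  obtain ⟨s, S, hS, rfl⟩ := (mem_measurableCylinders t).1 ht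
  obtain ⟨τ, hτ, hτs, hτA⟩ := h s
  have hτt : τ ⁻¹' cylinder s S = cylinder s S := by
    ext x
    simp [mem_cylinder, Finset.restrict_def, hτs x]
  have htAc : μ (cylinder s S ∆ Aᶜ) < μ univ / 2 := by
    rwa [← hτA, ← hτt, ← preimage_symmDiff,
      hτ.measure_preimage (hS.cylinder.nullMeasurableSet.symmDiff hA)]
  refine lt_irrefl (μ univ) ?_
  calc μ univ = μ (A ∆ Aᶜ) := by rw [symmDiff_compl_self, top_eq_univ]
    _ ≤ μ (A ∆ cylinder s S) + μ (cylinder s S ∆ Aᶜ) := measure_symmDiff_le _ _ _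
    _ < μ univ / 2 + μ univ / 2 := by rw [symmDiff_comm A]; exact ENNReal.add_lt_add htA htAc
    _ = μ univ := ENNReal.add_halves _

lemma cylB_nil : cylB [] = univ := by
  ext x; simp [cylB]

lemma measurableSet_cylB (l : List Bool) : MeasurableSet (cylB l) := by
  rw [cylB, ofPred_forall]
  exact .iInter fun i => measurableSet_eq_fun (measurable_pi_apply _) measurable_const

lemma preimage_restrict_Iic_singleton (a : ℕ) (v : Finset.Iic a → Bool) :
    (Finset.Iic a).restrict ⁻¹' ({v} : Set (Finset.Iic a → Bool)) =
      cylB (List.ofFn fun i : Fin (a + 1) => v ⟨i, Finset.mem_Iic.2 (Nat.lt_succ_iff.1 i.2)⟩) := by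
  ext x
  simp only [mem_preimage, mem_singleton_iff, funext_iff, cylB, mem_ofPred_eq, Fin.forall_iff,
    Subtype.forall, Finset.mem_Iic, List.length_ofFn, List.get_ofFn, Finset.restrict_def]
  simp

theorem ext_of_cylB {μ ν : Measure CantorB} [IsFiniteMeasure μ]
    (h : ∀ l, μ (cylB l) = ν (cylB l)) : μ = ν := by
  refine ext_of_generate_finite _ generateFrom_measurableCylinders.symm
    isPiSystem_measurableCylinders ?_ (by simpa [cylB_nil] using h [])
  rw [measurableCylinders_nat]
  simp only [mem_iUnion, mem_singleton_iff]
  rintro t ⟨a, S, hS, rfl⟩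
  have hmap : μ.map (Finset.Iic a).restrict = ν.map (Finset.Iic a).restrict := by
    refine Measure.ext_iff_singleton.2 fun v => ?_
    rw [Measure.map_apply (Finset.measurable_restrict _) (measurableSet_singleton v),
      Measure.map_apply (Finset.measurable_restrict _) (measurableSet_singleton v),
      preimage_restrict_Iic_singleton, h]
  rw [cylinder, ← Measure.map_apply (Finset.measurable_restrict _) hS, hmap,
    Measure.map_apply (Finset.measurable_restrict _) hS]

def flipBits (m : ℕ → Bool) (x : CantorB) : CantorB := fun n => Bool.xor (x n) (m n)

lemma measurable_flipBits (m : ℕ → Bool) : Measurable (flipBits m) := by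
  unfold flipBits; fun_prop

lemma preimage_flipBits_cylB (m : ℕ → Bool) (l : List Bool) :
    flipBits m ⁻¹' cylB l = cylB (l.mapIdx fun i b => Bool.xor b (m i)) := by
  ext x
  simp only [cylB, flipBits, mem_preimage, mem_ofPred_eq, Fin.forall_iff, List.length_mapIdx,
    List.get_eq_getElem, List.getElem_mapIdx]
  refine forall₂_congr fun i _ => ?_
  cases x i <;> cases m i <;> simp

theorem measurePreserving_flipBits {μ : Measure CantorB} [IsFiniteMeasure μ] {c : ℕ → ℝ≥0∞}
    (hcyl : ∀ l, μ (cylB l) = c l.length) (m : ℕ → Bool) :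
    MeasurePreserving (flipBits m) μ μ := by
  refine ⟨measurable_flipBits m, (ext_of_cylB fun l => ?_).symm⟩
  rw [Measure.map_apply (measurable_flipBits m) (measurableSet_cylB l), preimage_flipBits_cylB,
    hcyl, hcyl, List.length_mapIdx]

lemma preimage_flipBits_setOf_mem_ultrafilter {U : Ultrafilter ℕ}
    (hU : ∀ s : Set ℕ, s.Finite → s ∉ U) {m : ℕ → Bool} (hm : {n | m n = false}.Finite) :
    flipBits m ⁻¹' {x | {n | x n = true} ∈ U} = {x | {n | x n = true} ∈ U}ᶜ := by
  have hmU : {n | m n = true} ∈ U := by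
    convert Ultrafilter.compl_mem_iff_notMem.2 (hU _ hm) using 1
    ext n; simp
  have hrestrict (T : Set ℕ) : T ∈ U ↔ T ∩ {n | m n = true} ∈ U := by
    simp only [← Ultrafilter.mem_coe, inter_mem_iff, and_iff_left (Ultrafilter.mem_coe.2 hmU)]
  ext x
  simp only [mem_preimage, mem_ofPred_eq, mem_compl_iff, ← Ultrafilter.compl_mem_iff_notMem]
  rw [hrestrict, hrestrict {n | x n = true}ᶜ]
  congr! 1
  ext n
  simp only [mem_inter_iff, mem_ofPred_eq, mem_compl_iff, flipBits]
  cases x n <;> cases m n <;> simp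

theorem not_nullMeasurableSet_setOf_mem_ultrafilter {μ : Measure CantorB} [IsFiniteMeasure μ]
    [NeZero μ] (hμ : ∀ m, MeasurePreserving (flipBits m) μ μ) {U : Ultrafilter ℕ}
    (hU : ∀ s : Set ℕ, s.Finite → s ∉ U) :
    ¬ NullMeasurableSet {x : CantorB | {n | x n = true} ∈ U} μ :=
  not_nullMeasurableSet_of_preimage_eq_compl fun s =>
    ⟨flipBits fun n => decide (n ∉ s), hμ _, fun x i hi => by simp [flipBits, hi],
      preimage_flipBits_setOf_mem_ultrafilter hU (by simp)⟩

theorem Ultrafilter.exists_map_nat_forall_finite_notMem {α : Type*} {V : Ultrafilter α}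
    {g : ℕ → Set α} (hg : ∀ n, g n ∈ V) (hV : ⋂ n, g n ∉ V) :
    ∃ f : α → ℕ, ∀ s : Set ℕ, s.Finite → s ∉ V.map f := by
  refine ⟨fun a => sInf {n | a ∉ g n}, fun s hs hsV => ?_⟩
  obtain ⟨k, -, hk⟩ := Ultrafilter.eq_pure_of_finite_mem hs hsV
  have hkV : (fun a => sInf {n | a ∉ g n}) ⁻¹' {k} ∈ V := by
    rw [← Ultrafilter.mem_map, hk, Ultrafilter.mem_pure, mem_singleton_iff]
  have hsub : (fun a => sInf {n | a ∉ g n}) ⁻¹' {k} ∩ (⋂ n, g n)ᶜ ⊆ (g k)ᶜ := by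
    rintro a ⟨rfl, ha⟩
    obtain ⟨n, hn⟩ : ∃ n, a ∉ g n := by simpa using ha
    exact Nat.sInf_mem (s := {n | a ∉ g n}) ⟨n, hn⟩
  exact Ultrafilter.compl_notMem_iff.2 (hg k)
    (V.mem_of_superset (inter_mem hkV (Ultrafilter.compl_mem_iff_notMem.2 hV)) hsub)

/-- With respect to the standard coin-flipping measure `μ` on `2^ω`:
(1) if `U` is a non-principal ultrafilter on `ω` (contains no finite sets), then the
subset of `2^ω` coding `U` is not Lebesgue measurable; consequently
(2) if every subset of `2^ω` is Lebesgue measurable, then every ultrafilter on any set is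
countably complete (closed under countable intersections). -/
theorem nonprincipal_ultrafilter_gives_nonmeasurable_set
    (μ : Measure CantorB) (hprob : IsProbabilityMeasure μ)
    (hcyl : ∀ s : List Bool, μ (cylB s) = (1 / 2 : ENNReal) ^ s.length) :
    (∀ U : Ultrafilter ℕ, (∀ s : Set ℕ, s.Finite → s ∉ U) →
        ¬ NullMeasurableSet {x : CantorB | {n : ℕ | x n = true} ∈ U} μ) ∧
    ((∀ A : Set CantorB, NullMeasurableSet A μ) →
        ∀ (α : Type) (V : Ultrafilter α) (g : ℕ → Set α),
          (∀ n, g n ∈ V) → (⋂ n, g n) ∈ V) := by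
  have hflip := measurePreserving_flipBits hcyl
  refine ⟨fun U hU => not_nullMeasurableSet_setOf_mem_ultrafilter hflip hU,
    fun hnull α V g hg => ?_⟩
  by_contra hV
  obtain ⟨f, hf⟩ := Ultrafilter.exists_map_nat_forall_finite_notMem hg hV
  exact not_nullMeasurableSet_setOf_mem_ultrafilter hflip hf (hnull _)
end

section
/- Let ℙ and ℚ be preorders whose transitive closures are countable, and let i : ℙ → ℚ be a dense embedding. Then the Stone spaces St(ℙ) and St(ℚ) are isomorphic as Baire spaces: there exist comeager sets D ⊆ St(ℙ) and E ⊆ St(ℚ) and a homeomorphism between D and E. -/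
/-- A filter on a preorder: a nonempty, upward closed, downward directed set. -/
def IsPFilter {P : Type*} [Preorder P] (F : Set P) : Prop :=
  F.Nonempty ∧ (∀ p q : P, p ∈ F → p ≤ q → q ∈ F) ∧
    (∀ p q : P, p ∈ F → q ∈ F → ∃ r ∈ F, r ≤ p ∧ r ≤ q)

/-- An ultrafilter on a preorder: a maximal filter. -/
def IsPUltrafilter {P : Type*} [Preorder P] (F : Set P) : Prop :=
  IsPFilter F ∧ ∀ G : Set P, IsPFilter G → F ⊆ G → G = F

/-- The Stone space of a preorder: the set of all ultrafilters on it. -/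
def StoneSp (P : Type*) [Preorder P] : Type _ := {u : Set P // IsPUltrafilter u}

/-- The basic open set `O_p = {u ∈ St(ℙ) : p ∈ u}`. -/
def basicO {P : Type*} [Preorder P] (p : P) : Set (StoneSp P) :=
  {u : StoneSp P | p ∈ u.1}

/-- The topology on `St(ℙ)` generated by the sets `O_p`. -/
instance stoneTopology (P : Type*) [Preorder P] : TopologicalSpace (StoneSp P) :=
  TopologicalSpace.generateFrom (Set.range fun p : P => basicO p)

/-- Two conditions are compatible if they have a common extension. -/
def Compat {P : Type*} [Preorder P] (p q : P) : Prop := ∃ r : P, r ≤ p ∧ r ≤ q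

/-!
Call an ultrafilter `u` on `ℙ` generic if it meets countably many dense sets: for each `q ∈ ℚ`
the conditions `p` with `i p ≤ q` or `i p ⊥ q`, and for each `p₁, p₂ ∈ ℙ` the conditions that are
either a common extension of `p₁, p₂` or incompatible with one of them; call `v ∈ St(ℚ)` generic
if `i⁻¹[v]` is. Since `ℙ` and `ℚ` are countable, so is the family of dense sets, and the Baire
category argument makes both sets of generic points comeager; this replaces genericity over a
countable transitive model. On them `u ↦ upperClosure (i[u])` and `v ↦ i⁻¹[v]` are mutually
inverse continuous maps, since the preimage of a basic open set under either map is a union of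
basic open sets.
-/

open Set TopologicalSpace

section StoneSpace

variable {R : Type*} [Preorder R]

theorem isPFilter_sUnion_of_isChain {c : Set (Set R)} (hc : ∀ F ∈ c, IsPFilter F)
    (hchain : IsChain (· ⊆ ·) c) (hne : c.Nonempty) : IsPFilter (⋃₀ c) := by
  obtain ⟨F₀, hF₀⟩ := hne
  refine ⟨(hc F₀ hF₀).1.mono (subset_sUnion_of_mem hF₀), ?_, ?_⟩
  · rintro p q ⟨F, hF, hp⟩ hpq
    exact ⟨F, hF, (hc F hF).2.1 p q hp hpq⟩
  · rintro p q ⟨F, hF, hp⟩ ⟨G, hG, hq⟩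
    obtain hFG | hGF := hchain.total hF hG
    · obtain ⟨r, hr, hrp, hrq⟩ := (hc G hG).2.2 p q (hFG hp) hq
      exact ⟨r, ⟨G, hG, hr⟩, hrp, hrq⟩
    · obtain ⟨r, hr, hrp, hrq⟩ := (hc F hF).2.2 p q hp (hGF hq)
      exact ⟨r, ⟨F, hF, hr⟩, hrp, hrq⟩

theorem exists_isPUltrafilter_mem (t : R) : ∃ u : Set R, IsPUltrafilter u ∧ t ∈ u := by
  have hup : IsPFilter {x : R | t ≤ x} :=
    ⟨⟨t, le_rfl⟩, fun _ _ hp hpq => hp.trans hpq, fun _ _ hp hq => ⟨t, le_rfl, hp, hq⟩⟩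
  obtain ⟨m, -, ⟨hm, htm⟩, hmax⟩ := zorn_subset_nonempty {F : Set R | IsPFilter F ∧ t ∈ F}
    (fun c hcS hchain hne => ⟨⋃₀ c,
      ⟨isPFilter_sUnion_of_isChain (fun F hF => (hcS hF).1) hchain hne,
        let ⟨F₀, hF₀⟩ := hne; subset_sUnion_of_mem hF₀ (hcS hF₀).2⟩,
      fun _ => subset_sUnion_of_mem⟩)
    {x : R | t ≤ x} ⟨hup, le_rfl⟩
  exact ⟨m, ⟨hm, fun G hG hmG => (hmax ⟨hG, hmG htm⟩ hmG).antisymm hmG⟩, htm⟩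

theorem IsPFilter.compat {F : Set R} (hF : IsPFilter F) {p q : R} (hp : p ∈ F) (hq : q ∈ F) :
    Compat p q :=
  let ⟨r, _, hrp, hrq⟩ := hF.2.2 p q hp hq
  ⟨r, hrp, hrq⟩

theorem IsPFilter.isPUltrafilter {F : Set R} (hF : IsPFilter F)
    (h : ∀ q, q ∈ F ∨ ∃ p ∈ F, ¬ Compat p q) : IsPUltrafilter F := by
  refine ⟨hF, fun G hG hFG => Subset.antisymm (fun q hq => ?_) hFG⟩
  obtain hqF | ⟨p, hpF, hpq⟩ := h q
  · exact hqF
  · exact absurd (hG.compat (hFG hpF) hq) hpq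

def decidingSet (q : R) : Set R := {s | s ≤ q ∨ ¬ Compat s q}

def boundDecidingSet (p₁ p₂ : R) : Set R :=
  {p | (p ≤ p₁ ∧ p ≤ p₂) ∨ ¬ Compat p p₁ ∨ ¬ Compat p p₂}

theorem isCoinitial_decidingSet (q : R) : IsCoinitial (decidingSet q) := by
  intro r
  by_cases hrq : Compat r q
  · obtain ⟨s, hsr, hsq⟩ := hrq
    exact ⟨s, Or.inl hsq, hsr⟩
  · exact ⟨r, Or.inr hrq, le_rfl⟩

theorem isLowerSet_decidingSet (q : R) : IsLowerSet (decidingSet q) := by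
  rintro s s' hs's (hsq | hsq)
  · exact Or.inl (hs's.trans hsq)
  · exact Or.inr fun ⟨r, hrs', hrq⟩ => hsq ⟨r, hrs'.trans hs's, hrq⟩

theorem isCoinitial_boundDecidingSet (p₁ p₂ : R) : IsCoinitial (boundDecidingSet p₁ p₂) := by
  intro r
  by_cases hr₁ : Compat r p₁
  · obtain ⟨r', hr'r, hr'₁⟩ := hr₁
    by_cases hr'₂ : Compat r' p₂
    · obtain ⟨t, htr', ht₂⟩ := hr'₂
      exact ⟨t, Or.inl ⟨htr'.trans hr'₁, ht₂⟩, htr'.trans hr'r⟩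
    · exact ⟨r', Or.inr (Or.inr hr'₂), hr'r⟩
  · exact ⟨r, Or.inr (Or.inl hr₁), le_rfl⟩

theorem isPFilter_of_meets_boundDecidingSet {F : Set R} (hne : F.Nonempty)
    (hup : ∀ p q, p ∈ F → p ≤ q → q ∈ F) (hcompat : ∀ p ∈ F, ∀ q ∈ F, Compat p q)
    (hbound : ∀ p₁ p₂, (F ∩ boundDecidingSet p₁ p₂).Nonempty) : IsPFilter F := by
  refine ⟨hne, hup, fun p₁ p₂ hp₁ hp₂ => ?_⟩
  obtain ⟨p, hp, hbelow | hinc₁ | hinc₂⟩ := hbound p₁ p₂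
  · exact ⟨p, hp, hbelow⟩
  · exact absurd (hcompat p hp p₁ hp₁) hinc₁
  · exact absurd (hcompat p hp p₂ hp₂) hinc₂

theorem isOpen_basicO (p : R) : IsOpen (basicO p) :=
  isOpen_generateFrom_of_mem ⟨p, rfl⟩

theorem isTopologicalBasis_basicO : IsTopologicalBasis (range fun p : R => basicO p) := by
  refine ⟨?_, ?_, rfl⟩
  · rintro _ ⟨p, rfl⟩ _ ⟨q, rfl⟩ u ⟨hpu, hqu⟩
    obtain ⟨r, hru, hrp, hrq⟩ := u.2.1.2.2 p q hpu hqu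
    exact ⟨basicO r, ⟨r, rfl⟩, hru,
      fun w hrw => ⟨w.2.1.2.1 r p hrw hrp, w.2.1.2.1 r q hrw hrq⟩⟩
  · refine eq_univ_of_forall fun u => ?_
    obtain ⟨t, ht⟩ := u.2.1.1
    exact ⟨basicO t, ⟨t, rfl⟩, ht⟩

theorem dense_biUnion_basicO {A : Set R} (hA : IsCoinitial A) : Dense (⋃ p ∈ A, basicO p) := by
  refine isTopologicalBasis_basicO.dense_iff.2 ?_
  rintro _ ⟨r, rfl⟩ -
  obtain ⟨t, htA, htr⟩ := hA r
  obtain ⟨w, hw, htw⟩ := exists_isPUltrafilter_mem t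
  exact ⟨⟨w, hw⟩, hw.1.2.1 t r htw htr, mem_biUnion htA htw⟩

/-- The Rasiowa–Sikorski lemma in Baire-category form. -/
theorem residual_setOf_forall_inter_nonempty {ι : Type*} [Countable ι] {A : ι → Set R}
    (hA : ∀ j, IsCoinitial (A j)) :
    {u : StoneSp R | ∀ j, (u.1 ∩ A j).Nonempty} ∈ residual (StoneSp R) := by
  have hmeets : ∀ j, (⋃ p ∈ A j, basicO p) ∈ residual (StoneSp R) := fun j =>
    residual_of_dense_open (isOpen_biUnion fun p _ => isOpen_basicO p) (dense_biUnion_basicO (hA j))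
  refine Filter.mem_of_superset (countable_iInter_mem.2 hmeets) fun u hu j => ?_
  obtain ⟨p, hp, hpu⟩ := mem_iUnion₂.1 (mem_iInter.1 hu j)
  exact ⟨p, hpu, hp⟩

end StoneSpace

section DenseEmbedding

variable {P Q : Type*} [Preorder P] [Preorder Q] {i : P → Q}

theorem Compat.map (hmono : Monotone i) {p q : P} (h : Compat p q) : Compat (i p) (i q) :=
  let ⟨r, hrp, hrq⟩ := h
  ⟨i r, hmono hrp, hmono hrq⟩

theorem IsCoinitial.image (hmono : Monotone i) (hdense : ∀ q, ∃ p, i p ≤ q) {A : Set P}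
    (hA : IsCoinitial A) : IsCoinitial (i '' A) := by
  intro r
  obtain ⟨p, hpr⟩ := hdense r
  obtain ⟨t, htA, htp⟩ := hA p
  exact ⟨i t, mem_image_of_mem i htA, (hmono htp).trans hpr⟩

theorem IsCoinitial.preimage (hmono : Monotone i)
    (hincomp : ∀ p p' : P, ¬ Compat p p' → ¬ Compat (i p) (i p'))
    (hdense : ∀ q, ∃ p, i p ≤ q) {S : Set Q} (hS : IsCoinitial S) (hlow : IsLowerSet S) :
    IsCoinitial (i ⁻¹' S) := by
  intro r
  obtain ⟨s, hsS, hsr⟩ := hS (i r)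
  obtain ⟨p, hps⟩ := hdense s
  obtain ⟨t, htp, htr⟩ := not_imp_not.1 (hincomp p r) ⟨i p, le_rfl, hps.trans hsr⟩
  exact ⟨t, hlow ((hmono htp).trans hps) hsS, htr⟩

def IsGenericFor (i : P → Q) (F : Set P) : Prop :=
  (∀ q, (F ∩ i ⁻¹' decidingSet q).Nonempty) ∧ ∀ p₁ p₂, (F ∩ boundDecidingSet p₁ p₂).Nonempty

theorem IsGenericFor.mono {F G : Set P} (hF : IsGenericFor i F) (hFG : F ⊆ G) :
    IsGenericFor i G :=
  ⟨fun q => (hF.1 q).mono (inter_subset_inter_left _ hFG),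
    fun p₁ p₂ => (hF.2 p₁ p₂).mono (inter_subset_inter_left _ hFG)⟩

theorem residual_setOf_isGenericFor [Countable P] [Countable Q] (hmono : Monotone i)
    (hincomp : ∀ p p' : P, ¬ Compat p p' → ¬ Compat (i p) (i p'))
    (hdense : ∀ q, ∃ p, i p ≤ q) :
    {u : StoneSp P | IsGenericFor i u.1} ∈ residual (StoneSp P) := by
  have hdeciding := residual_setOf_forall_inter_nonempty fun q : Q =>
    (isCoinitial_decidingSet q).preimage hmono hincomp hdense (isLowerSet_decidingSet q)
  have hbound := residual_setOf_forall_inter_nonempty fun p : P × P =>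
    isCoinitial_boundDecidingSet p.1 p.2
  exact Filter.mem_of_superset (Filter.inter_mem hdeciding hbound)
    fun u ⟨hu₁, hu₂⟩ => ⟨hu₁, fun p₁ p₂ => hu₂ (p₁, p₂)⟩

theorem residual_setOf_isGenericFor_preimage [Countable P] [Countable Q] (hmono : Monotone i)
    (hincomp : ∀ p p' : P, ¬ Compat p p' → ¬ Compat (i p) (i p'))
    (hdense : ∀ q, ∃ p, i p ≤ q) :
    {v : StoneSp Q | IsGenericFor i (i ⁻¹' v.1)} ∈ residual (StoneSp Q) := by
  have hpull {v : Set Q} {A : Set P} (h : (v ∩ i '' A).Nonempty) : (i ⁻¹' v ∩ A).Nonempty := by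
    rwa [inter_comm, ← image_inter_nonempty_iff, inter_comm]
  have hdeciding := residual_setOf_forall_inter_nonempty fun q : Q =>
    ((isCoinitial_decidingSet q).preimage hmono hincomp hdense
      (isLowerSet_decidingSet q)).image hmono hdense
  have hbound := residual_setOf_forall_inter_nonempty fun p : P × P =>
    (isCoinitial_boundDecidingSet p.1 p.2).image hmono hdense
  exact Filter.mem_of_superset (Filter.inter_mem hdeciding hbound)
    fun v ⟨hv₁, hv₂⟩ => ⟨fun q => hpull (hv₁ q), fun p₁ p₂ => hpull (hv₂ (p₁, p₂))⟩

theorem IsPFilter.upperClosure_image (hmono : Monotone i) {u : Set P} (hu : IsPFilter u) :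
    IsPFilter (upperClosure (i '' u) : Set Q) := by
  refine ⟨(hu.1.image i).mono subset_upperClosure,
    fun q q' hq hqq' => (upperClosure _).upper hqq' hq, ?_⟩
  rintro q₁ q₂ ⟨_, ⟨p₁, hp₁, rfl⟩, hq₁⟩ ⟨_, ⟨p₂, hp₂, rfl⟩, hq₂⟩
  obtain ⟨r, hr, hrp₁, hrp₂⟩ := hu.2.2 p₁ p₂ hp₁ hp₂
  exact ⟨i r, subset_upperClosure (mem_image_of_mem i hr),
    (hmono hrp₁).trans hq₁, (hmono hrp₂).trans hq₂⟩

theorem isPUltrafilter_upperClosure_image (hmono : Monotone i) {u : Set P} (hu : IsPFilter u)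
    (hgen : IsGenericFor i u) : IsPUltrafilter (upperClosure (i '' u) : Set Q) := by
  refine (hu.upperClosure_image hmono).isPUltrafilter fun q => ?_
  obtain ⟨p, hpu, hpq | hpq⟩ := hgen.1 q
  · exact Or.inl ⟨i p, mem_image_of_mem i hpu, hpq⟩
  · exact Or.inr ⟨i p, subset_upperClosure (mem_image_of_mem i hpu), hpq⟩

theorem IsPFilter.preimage (hmono : Monotone i)
    (hincomp : ∀ p p' : P, ¬ Compat p p' → ¬ Compat (i p) (i p'))
    {v : Set Q} (hv : IsPFilter v) (hgen : IsGenericFor i (i ⁻¹' v)) : IsPFilter (i ⁻¹' v) := by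
  obtain ⟨q, hq⟩ := hv.1
  refine isPFilter_of_meets_boundDecidingSet ((hgen.1 q).mono inter_subset_left)
    (fun p p' hp hpp' => hv.2.1 _ _ hp (hmono hpp')) (fun p hp p' hp' => ?_) hgen.2
  exact not_imp_not.1 (hincomp p p') (hv.compat hp hp')

theorem isPUltrafilter_preimage (hmono : Monotone i)
    (hincomp : ∀ p p' : P, ¬ Compat p p' → ¬ Compat (i p) (i p'))
    {v : Set Q} (hv : IsPFilter v) (hgen : IsGenericFor i (i ⁻¹' v)) :
    IsPUltrafilter (i ⁻¹' v) := by
  refine (hv.preimage hmono hincomp hgen).isPUltrafilter fun p₀ => ?_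
  obtain ⟨p, hpv, hpp₀ | hpp₀⟩ := hgen.1 (i p₀)
  · exact Or.inl (hv.2.1 _ _ hpv hpp₀)
  · exact Or.inr ⟨p, hpv, fun h => hpp₀ (h.map hmono)⟩

theorem preimage_upperClosure_image (hmono : Monotone i)
    (hincomp : ∀ p p' : P, ¬ Compat p p' → ¬ Compat (i p) (i p'))
    {u : Set P} (hu : IsPUltrafilter u) (hgen : IsGenericFor i u) :
    i ⁻¹' upperClosure (i '' u) = u :=
  hu.2 _ ((hu.1.upperClosure_image hmono).preimage hmono hincomp
    (hgen.mono (image_subset_iff.1 subset_upperClosure))) (image_subset_iff.1 subset_upperClosure)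

theorem upperClosure_image_preimage (hmono : Monotone i)
    (hincomp : ∀ p p' : P, ¬ Compat p p' → ¬ Compat (i p) (i p'))
    {v : Set Q} (hv : IsPUltrafilter v) (hgen : IsGenericFor i (i ⁻¹' v)) :
    (upperClosure (i '' (i ⁻¹' v)) : Set Q) = v := by
  have hsub : (upperClosure (i '' (i ⁻¹' v)) : Set Q) ⊆ v := by
    rintro q ⟨_, ⟨p, hpv, rfl⟩, hpq⟩
    exact hv.1.2.1 _ _ hpv hpq
  exact ((isPUltrafilter_upperClosure_image hmono (hv.1.preimage hmono hincomp hgen) hgen).2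
    v hv.1 hsub).symm

theorem isOpen_setOf_mem_upperClosure_image (q : Q) :
    IsOpen {u : StoneSp P | q ∈ upperClosure (i '' u.1)} := by
  have hunion : {u : StoneSp P | q ∈ upperClosure (i '' u.1)} = ⋃ p, ⋃ (_ : i p ≤ q), basicO p := by
    ext u
    simp [basicO, and_comm]
  rw [hunion]
  exact isOpen_iUnion fun p => isOpen_iUnion fun _ => isOpen_basicO p

def genericHomeomorph (hmono : Monotone i)
    (hincomp : ∀ p p' : P, ¬ Compat p p' → ¬ Compat (i p) (i p')) :
    {u : StoneSp P | IsGenericFor i u.1} ≃ₜ {v : StoneSp Q | IsGenericFor i (i ⁻¹' v.1)} where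
  toFun u := ⟨⟨upperClosure (i '' u.1.1), isPUltrafilter_upperClosure_image hmono u.1.2.1 u.2⟩,
    u.2.mono (image_subset_iff.1 subset_upperClosure)⟩
  invFun v := ⟨⟨i ⁻¹' v.1.1, isPUltrafilter_preimage hmono hincomp v.1.2.1 v.2⟩, v.2⟩
  left_inv u := Subtype.ext <| Subtype.ext <| preimage_upperClosure_image hmono hincomp u.1.2 u.2
  right_inv v := Subtype.ext <| Subtype.ext <| upperClosure_image_preimage hmono hincomp v.1.2 v.2
  continuous_toFun := by
    refine Continuous.subtype_mk (isTopologicalBasis_basicO.continuous_iff.2 ?_) _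
    rintro _ ⟨q, rfl⟩
    exact (isOpen_setOf_mem_upperClosure_image q).preimage continuous_subtype_val
  continuous_invFun := by
    refine Continuous.subtype_mk (isTopologicalBasis_basicO.continuous_iff.2 ?_) _
    rintro _ ⟨p, rfl⟩
    exact (isOpen_basicO (i p)).preimage continuous_subtype_val

end DenseEmbedding

/-- If `ℙ`, `ℚ` are countable preorders (elements of `H_{ω₁}`) and `i : ℙ → ℚ` is a dense
embedding (order-preserving, incompatibility-preserving, with dense image), then
`St(ℙ)` and `St(ℚ)` are isomorphic as Baire spaces: there are comeager sets
`D ⊆ St(ℙ)`, `E ⊆ St(ℚ)` and a homeomorphism between `D` and `E`. -/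
theorem stone_spaces_isomorphic_as_baire_spaces
    {P Q : Type} [Preorder P] [Preorder Q] [Countable P] [Countable Q]
    (i : P → Q)
    (hmono : ∀ p p' : P, p ≤ p' → i p ≤ i p')
    (hincomp : ∀ p p' : P, ¬ Compat p p' → ¬ Compat (i p) (i p'))
    (hdense : ∀ q : Q, ∃ p : P, i p ≤ q) :
    ∃ (D : Set (StoneSp P)) (E : Set (StoneSp Q)),
      IsMeagre Dᶜ ∧ IsMeagre Eᶜ ∧ Nonempty (D ≃ₜ E) := by
  refine ⟨_, _, ?_, ?_, ⟨genericHomeomorph hmono hincomp⟩⟩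
  · rw [IsMeagre, compl_compl]
    exact residual_setOf_isGenericFor hmono hincomp hdense
  · rw [IsMeagre, compl_compl]
    exact residual_setOf_isGenericFor_preimage hmono hincomp hdense
end

section
/- Assume every subset of 2^ω has the Baire property, and let (f_η)_{η ∈ I} be a family of functions f_η : 2^ω → [0,1] indexed by a set I, such that the meager ideal is closed under well-ordered unions and I is well-orderable. Then there is a single comeager set D ⊆ 2^ω such that every f_η is continuous on D. -/
/-- A set has the Baire property if it differs from an open set by a meager set. -/
def HasBaireProperty (A : Set CantorB) : Prop :=
  ∃ U : Set CantorB, IsOpen U ∧ IsMeagre (symmDiff A U)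

/-!
Each `f η` is Baire measurable, so it agrees off a meagre set with an open set on each of the
countably many basic open sets of `ℝ`; outside the union of these meagre sets `f η` is
continuous. The resulting comeagre sets are then intersected over all `η`: enumerating the
index set by an initial segment of the ordinals, the union of their meagre complements is
meagre by the hypothesis on well-ordered unions.
-/

open Set Filter Topology TopologicalSpace

theorem TopologicalSpace.IsTopologicalBasis.continuousOn_of_forall_exists_isOpen
    {X Y : Type*} [TopologicalSpace X] [TopologicalSpace Y] {B : Set (Set Y)}
    (hB : IsTopologicalBasis B) {g : X → Y} {D : Set X}
    (h : ∀ V ∈ B, ∃ U, IsOpen U ∧ ∀ x ∈ D, g x ∈ V ↔ x ∈ U) : ContinuousOn g D := by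
  rw [continuousOn_iff_continuous_domRestrict, hB.continuous_iff]
  intro V hV
  obtain ⟨U, hU, hgU⟩ := h V hV
  convert hU.preimage continuous_subtype_val using 1
  ext ⟨x, hx⟩
  exact hgU x hx

theorem HasBaireProperty.baireMeasurableSet {A : Set CantorB} (hA : HasBaireProperty A) :
    BaireMeasurableSet A := by
  obtain ⟨U, hU, hAU⟩ := hA
  refine BaireMeasurableSet.iff_residualEq_isOpen.2 ⟨U, hU, eventuallyEq_set.2 ?_⟩
  filter_upwards [hAU] with x hx
  simpa [mem_symmDiff, not_or, iff_iff_implies_and_implies] using hx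

theorem exists_mem_residual_continuousOn {X Y : Type*} [TopologicalSpace X]
    [TopologicalSpace Y] [SecondCountableTopology Y] {g : X → Y}
    (hg : ∀ V, IsOpen V → BaireMeasurableSet (g ⁻¹' V)) :
    ∃ D ∈ residual X, ContinuousOn g D := by
  obtain ⟨b, hbc, -, hb⟩ := exists_countable_basis Y
  have := hbc.to_subtype
  choose U hUopen hgU using fun V : b => (hg V (hb.isOpen V.2)).residualEq_isOpen
  refine ⟨{x | ∀ V : b, x ∈ g ⁻¹' V ↔ x ∈ U V},
    eventually_countable_forall.2 fun V => eventuallyEq_set.1 (hgU V), ?_⟩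
  exact hb.continuousOn_of_forall_exists_isOpen fun V hV =>
    ⟨U ⟨V, hV⟩, hUopen _, fun x hx => hx ⟨V, hV⟩⟩

theorem isMeagre_iUnion_of_isMeagre_ordinal_iUnion.{u, v} {X : Type*} [TopologicalSpace X]
    (hUnion : ∀ (γ : Ordinal.{max v u}) (B : {o : Ordinal // o < γ} → Set X),
      (∀ j, IsMeagre (B j)) → IsMeagre (⋃ j, B j))
    {ι : Type v} {s : ι → Set X} (hs : ∀ i, IsMeagre (s i)) : IsMeagre (⋃ i, s i) := by
  -- enumerate `ι` by the ordinals below the order type of a well-order on it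
  let r := @WellOrderingRel (ULift.{u} ι)
  have hsurj : Function.Surjective fun j : Iio (Ordinal.type r) => (Ordinal.enum r j).down :=
    Equiv.ulift.surjective.comp (Ordinal.enum r).surjective
  rw [← hsurj.iUnion_comp]
  exact hUnion _ _ fun j => hs _

theorem common_comeager_continuity_set_general
    {I : Type}
    (hBP : ∀ A : Set CantorB, HasBaireProperty A)
    (hUnion : ∀ (γ : Ordinal) (B : {o : Ordinal // o < γ} → Set CantorB),
        (∀ j, IsMeagre (B j)) → IsMeagre (⋃ j, B j))
    (f : I → CantorB → ℝ) :
    ∃ D : Set CantorB, IsMeagre Dᶜ ∧ ∀ η, ContinuousOn (f η) D := by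
  choose D hD hfD using fun η =>
    exists_mem_residual_continuousOn fun V _ => (hBP (f η ⁻¹' V)).baireMeasurableSet
  refine ⟨⋂ η, D η, ?_, fun η => (hfD η).mono (iInter_subset D η)⟩
  rw [compl_iInter]
  exact isMeagre_iUnion_of_isMeagre_ordinal_iUnion hUnion fun η => by
    rw [IsMeagre, compl_compl]
    exact hD η

/-- Assume every subset of `2^ω` has the Baire property and the meager ideal is closed
under well-ordered unions.  Then for any well-orderable index set `I` and any family
`f_η : 2^ω → [0,1]` (`η ∈ I`), there is a single comeager set `D` on which every `f_η` is
continuous. -/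
theorem common_comeager_continuity_set
    {I : Type}
    (hBP : ∀ A : Set CantorB, HasBaireProperty A)
    (hUnion : ∀ (γ : Ordinal) (B : {o : Ordinal // o < γ} → Set CantorB),
        (∀ j, IsMeagre (B j)) → IsMeagre (⋃ j, B j))
    (hwo : ∃ r : I → I → Prop, IsWellOrder I r)
    (f : I → CantorB → ℝ)
    (hf : ∀ η x, f η x ∈ Set.Icc (0 : ℝ) 1) :
    ∃ D : Set CantorB, IsMeagre Dᶜ ∧ ∀ η, ContinuousOn (f η) D :=
  common_comeager_continuity_set_general hBP hUnion f
end
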